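/- For every bounded linear operator A on H and every t ∈ [0,1], ‖A‖_{t-ber} ≤ sqrt( ‖t·A*A + (1−t)·AA*‖_ber ). In particular, ‖A‖_{1/2-ber} ≤ sqrt( (1/2)·‖A*A + AA*‖_ber ). -/

import Mathlib

open ContinuousLinearMap
open scoped InnerProductSpace

/-- The `t`-Berezin norm of `A` with respect to the family `k` of (normalized reproducing
kernel) vectors. -/
noncomputable def tber {E : Type*} [NormedAddCommGroup E] [InnerProductSpace ℂ E]
    [CompleteSpace E] {ι : Type*} (k : ι → E) (t : ℝ) (A : E →L[ℂ] E) : ℝ :=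
  ⨆ p : ι × ι, (t * ‖⟪A (k p.1), k p.2⟫_ℂ‖ + (1 - t) * ‖⟪adjoint A (k p.1), k p.2⟫_ℂ‖)

/-- The Berezin norm of `A` with respect to the family `k`. -/
noncomputable def berNorm {E : Type*} [NormedAddCommGroup E] [InnerProductSpace ℂ E]
    {ι : Type*} (k : ι → E) (A : E →L[ℂ] E) : ℝ :=
  ⨆ p : ι × ι, ‖⟪A (k p.1), k p.2⟫_ℂ‖

/-- The Berezin number of `A` with respect to the family `k`. -/
noncomputable def berNum {E : Type*} [NormedAddCommGroup E] [InnerProductSpace ℂ E]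
    {ι : Type*} (k : ι → E) (A : E →L[ℂ] E) : ℝ :=
  ⨆ l : ι, ‖⟪A (k l), k l⟫_ℂ‖

/-- The modulus `|A| = (A*A)^(1/2)` of an operator, via the continuous functional calculus. -/
noncomputable def absOp {H : Type*} [NormedAddCommGroup H] [InnerProductSpace ℂ H]
    [CompleteSpace H] (A : H →L[ℂ] H) : H →L[ℂ] H :=
  cfc Real.sqrt (adjoint A * A)

/-- Real powers of a (positive) operator via the continuous functional calculus. -/
noncomputable def rpowOp {H : Type*} [NormedAddCommGroup H] [InnerProductSpace ℂ H]
    [CompleteSpace H] (A : H →L[ℂ] H) (r : ℝ) : H →L[ℂ] H :=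
  cfc (fun x : ℝ => x ^ r) A

private lemma sqrt_concave' {t a b : ℝ} (ht0 : 0 ≤ t) (ht1 : t ≤ 1) (ha : 0 ≤ a) (hb : 0 ≤ b) :
    t * Real.sqrt a + (1 - t) * Real.sqrt b ≤ Real.sqrt (t * a + (1 - t) * b) := by
  have hsa := Real.sqrt_nonneg a
  have hsb := Real.sqrt_nonneg b
  have h1t : 0 ≤ 1 - t := by linarith
  rw [show t * a + (1 - t) * b = t * Real.sqrt a ^ 2 + (1 - t) * Real.sqrt b ^ 2 by
    rw [Real.sq_sqrt ha, Real.sq_sqrt hb]]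
  have hx : 0 ≤ t * Real.sqrt a + (1 - t) * Real.sqrt b := by
    nlinarith [mul_nonneg ht0 hsa, mul_nonneg h1t hsb]
  rw [Real.le_sqrt hx]
  · nlinarith [sq_nonneg (Real.sqrt a - Real.sqrt b), mul_nonneg (mul_nonneg ht0 h1t)
      (sq_nonneg (Real.sqrt a - Real.sqrt b))]
  · nlinarith [mul_nonneg ht0 (sq_nonneg (Real.sqrt a)),
      mul_nonneg h1t (sq_nonneg (Real.sqrt b))]

private lemma main_tber {H : Type*} [NormedAddCommGroup H] [InnerProductSpace ℂ H]
    [CompleteSpace H] {Ω : Type*} [Nonempty Ω] (k : Ω → H) (hk : ∀ l, ‖k l‖ = 1)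
    (t : ℝ) (ht : t ∈ Set.Icc (0 : ℝ) 1) (A : H →L[ℂ] H) :
    tber k t A ≤ Real.sqrt (berNorm k (t • (adjoint A * A) + (1 - t) • (A * adjoint A))) := by
  obtain ⟨ht0, ht1⟩ := ht
  have h1t : (0:ℝ) ≤ 1 - t := by linarith
  set B : H →L[ℂ] H := t • (adjoint A * A) + (1 - t) • (A * adjoint A) with hBdef
  have hB : ∀ x : H, ⟪B x, x⟫_ℂ = ((t * ‖A x‖ ^ 2 + (1 - t) * ‖adjoint A x‖ ^ 2 : ℝ) : ℂ) := by
    intro x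
    have h1 : ⟪(adjoint A * A) x, x⟫_ℂ = (‖A x‖ : ℂ) ^ 2 := by
      rw [ContinuousLinearMap.mul_apply, adjoint_inner_left, inner_self_eq_norm_sq_to_K]
      norm_cast
    have h2 : ⟪(A * adjoint A) x, x⟫_ℂ = (‖adjoint A x‖ : ℂ) ^ 2 := by
      rw [ContinuousLinearMap.mul_apply, ← adjoint_inner_right, inner_self_eq_norm_sq_to_K]
      norm_cast
    have hs : ∀ (r : ℝ) (u v : H), ⟪(r : ℝ) • u, v⟫_ℂ = (r : ℂ) * ⟪u, v⟫_ℂ := by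
      intro r u v
      rw [RCLike.real_smul_eq_coe_smul (K := ℂ), inner_smul_left]
      simp
    have hBx : B x = (t : ℝ) • ((adjoint A * A) x) + ((1 - t) : ℝ) • ((A * adjoint A) x) := by
      rw [hBdef, ContinuousLinearMap.add_apply, ContinuousLinearMap.smul_apply,
        ContinuousLinearMap.smul_apply]
    rw [hBx, inner_add_left, hs, hs, h1, h2]
    push_cast
    ring
  -- bddAbove of the berNorm family
  have hbdd : BddAbove (Set.range fun p : Ω × Ω => ‖⟪B (k p.1), k p.2⟫_ℂ‖) := by
    refine ⟨‖B‖, ?_⟩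
    rintro _ ⟨p, rfl⟩
    calc ‖⟪B (k p.1), k p.2⟫_ℂ‖ ≤ ‖B (k p.1)‖ * ‖k p.2‖ := norm_inner_le_norm _ _
      _ ≤ ‖B‖ * ‖k p.1‖ * ‖k p.2‖ := by
          gcongr; exact le_opNorm B (k p.1)
      _ = ‖B‖ := by rw [hk, hk]; ring
  refine ciSup_le fun p => ?_
  obtain ⟨l, m⟩ := p
  have cs1 : ‖⟪A (k l), k m⟫_ℂ‖ ≤ ‖A (k l)‖ := by
    calc ‖⟪A (k l), k m⟫_ℂ‖ ≤ ‖A (k l)‖ * ‖k m‖ := norm_inner_le_norm _ _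
      _ = ‖A (k l)‖ := by rw [hk]; ring
  have cs2 : ‖⟪adjoint A (k l), k m⟫_ℂ‖ ≤ ‖adjoint A (k l)‖ := by
    calc ‖⟪adjoint A (k l), k m⟫_ℂ‖ ≤ ‖adjoint A (k l)‖ * ‖k m‖ := norm_inner_le_norm _ _
      _ = ‖adjoint A (k l)‖ := by rw [hk]; ring
  have step1 : t * ‖⟪A (k l), k m⟫_ℂ‖ + (1 - t) * ‖⟪adjoint A (k l), k m⟫_ℂ‖
      ≤ t * ‖A (k l)‖ + (1 - t) * ‖adjoint A (k l)‖ := by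
    gcongr
  have step2 : t * ‖A (k l)‖ + (1 - t) * ‖adjoint A (k l)‖
      ≤ Real.sqrt (t * ‖A (k l)‖ ^ 2 + (1 - t) * ‖adjoint A (k l)‖ ^ 2) := by
    have := sqrt_concave' ht0 ht1 (sq_nonneg ‖A (k l)‖) (sq_nonneg ‖adjoint A (k l)‖)
    rwa [Real.sqrt_sq (norm_nonneg _), Real.sqrt_sq (norm_nonneg _)] at this
  have key : t * ‖A (k l)‖ ^ 2 + (1 - t) * ‖adjoint A (k l)‖ ^ 2 = ‖⟪B (k l), k l⟫_ℂ‖ := by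
    rw [hB (k l), Complex.norm_real, Real.norm_of_nonneg]
    have h1 := mul_nonneg ht0 (sq_nonneg ‖A (k l)‖)
    have h2 := mul_nonneg h1t (sq_nonneg ‖adjoint A (k l)‖)
    linarith
  have step3 : Real.sqrt (t * ‖A (k l)‖ ^ 2 + (1 - t) * ‖adjoint A (k l)‖ ^ 2)
      ≤ Real.sqrt (berNorm k B) := by
    apply Real.sqrt_le_sqrt
    rw [key]
    exact le_ciSup hbdd (l, l)
  calc t * ‖⟪A (k l), k m⟫_ℂ‖ + (1 - t) * ‖⟪adjoint A (k l), k m⟫_ℂ‖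
      ≤ t * ‖A (k l)‖ + (1 - t) * ‖adjoint A (k l)‖ := step1
    _ ≤ Real.sqrt (t * ‖A (k l)‖ ^ 2 + (1 - t) * ‖adjoint A (k l)‖ ^ 2) := step2
    _ ≤ Real.sqrt (berNorm k B) := step3

set_option synthInstance.maxHeartbeats 1000000 in
theorem stmt4 {H : Type*} [NormedAddCommGroup H] [InnerProductSpace ℂ H] [CompleteSpace H]
    {Ω : Type*} [Nonempty Ω] (k : Ω → H) (hk : ∀ l, ‖k l‖ = 1)
    (t : ℝ) (ht : t ∈ Set.Icc (0 : ℝ) 1) (A : H →L[ℂ] H) :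
    tber k t A ≤ Real.sqrt (berNorm k (t • (adjoint A * A) + (1 - t) • (A * adjoint A))) ∧
    tber k (1 / 2) A ≤ Real.sqrt ((1 / 2) * berNorm k (adjoint A * A + A * adjoint A)) := by
  refine ⟨main_tber k hk t ht A, ?_⟩
  have h := main_tber k hk (1 / 2) (by norm_num) A
  have hop : (1 / 2 : ℝ) • (adjoint A * A) + (1 - 1 / 2 : ℝ) • (A * adjoint A)
      = (1 / 2 : ℝ) • (adjoint A * A + A * adjoint A) := by
    rw [smul_add]; norm_num
  have hber : berNorm k ((1 / 2 : ℝ) • (adjoint A * A + A * adjoint A))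
      = (1 / 2) * berNorm k (adjoint A * A + A * adjoint A) := by
    unfold berNorm
    rw [Real.mul_iSup_of_nonneg (by norm_num)]
    congr 1
    funext p
    rw [show ((1 / 2 : ℝ) • (adjoint A * A + A * adjoint A)) (k p.1)
        = (1 / 2 : ℝ) • ((adjoint A * A + A * adjoint A) (k p.1)) by simp,
      RCLike.real_smul_eq_coe_smul (K := ℂ), inner_smul_left]
    simp [inner_add_left]
  rw [hop, hber] at h
  exact h
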